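/- For the cosine basis $m_1(s) = 1/\sqrt{t}$, $m_i(s) = \sqrt{2/t}\cos((i-1)\pi s/t)$ for $i \ge 2$ on $[0,t]$, the truncation error of the Brownian motion expansion satisfies $\sup_{0 \le s \le t} \mathbb{E}\big[W(s) - \sum_{i=1}^K \xi_i \int_0^s m_i(\tau)d\tau\big]^2 = O(t/K)$ as $K \to \infty$. -/

import Mathlib

/-!
Since `I` is an isometry and `e` is orthonormal, the mean square error is
`‖1_{[0,s]} - ∑_{i<K} ⟪e i, 1_{[0,s]}⟫ e i‖² = s - ∑_{i<K} (∫₀ˢ m i)²`.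
The cosine coefficients are `(∫₀ˢ m 0)² = s²/t` and `(∫₀ˢ m i)² = 2t sin²(iπs/t)/(iπ)²`, while the
Fourier series of the Bernoulli polynomial `B₂` gives `∑_{i≥1} sin²(iπx)/i² = π²(x - x²)/2`,
i.e. `s = s²/t + ∑_{i≥1} 2t sin²(iπs/t)/(iπ)²`. The error is therefore the tail of this series,
at most `(2t/π²) ∑_{i≥K} 1/i² ≤ 4t/(π²K) ≤ t/K`.
-/

open MeasureTheory ProbabilityTheory

lemma HasSum.sub_sum_range_le_two_div {f : ℕ → ℝ} {a : ℝ} (hf : HasSum f a)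
    (hf_le : ∀ n, f n ≤ 1 / (n : ℝ) ^ 2) {K : ℕ} (hK : 1 ≤ K) :
    a - ∑ i ∈ Finset.range K, f i ≤ 2 / K := by
  refine le_of_tendsto (hf.tendsto_sum_nat.sub_const _) ?_
  filter_upwards [Filter.eventually_ge_atTop K] with n hn
  have hIco : Finset.Ico K n = Finset.Ioo (K - 1) n := by
    rw [← Finset.Ico_add_one_left_eq_Ioo, Nat.sub_add_cancel hK]
  calc ∑ i ∈ Finset.range n, f i - ∑ i ∈ Finset.range K, f i
      = ∑ i ∈ Finset.Ioo (K - 1) n, f i := by rw [← Finset.sum_Ico_eq_sub _ hn, hIco]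
    _ ≤ ∑ i ∈ Finset.Ioo (K - 1) n, ((i : ℝ) ^ 2)⁻¹ :=
        Finset.sum_le_sum fun i _ => (hf_le i).trans_eq (one_div _)
    _ ≤ 2 / ((K - 1 : ℕ) + 1) := sum_Ioo_inv_sq_le _ _
    _ = 2 / K := by rw [Nat.cast_sub hK, Nat.cast_one, sub_add_cancel]

section CosineBasis

open Real

noncomputable def cosineBasisNormalizer (t : ℝ) (i : ℕ) : ℝ :=
  if i = 0 then 1 / √t else √(2 / t)

noncomputable def cosineBasis (t : ℝ) (i : ℕ) (s : ℝ) : ℝ :=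
  cosineBasisNormalizer t i * cos (i * π * s / t)

variable {t : ℝ}

lemma integral_cos_int_mul_pi_div (ht : t ≠ 0) (k : ℤ) :
    ∫ x in (0 : ℝ)..t, cos (k * π * x / t) = if k = 0 then t else 0 := by
  split_ifs with hk
  · simp [hk]
  · have hc : (k * π / t : ℝ) ≠ 0 := by simp [hk, ht, pi_ne_zero]
    have hsin : sin (k * π / t * t) = 0 := by
      rw [div_mul_cancel₀ _ ht]
      exact sin_int_mul_pi k
    simp_rw [show ∀ x : ℝ, k * π * x / t = k * π / t * x from fun x => by ring]
    rw [intervalIntegral.integral_comp_mul_left (fun x => cos x) hc, integral_cos]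
    simp [hsin]

lemma cosineBasisNormalizer_sq (ht : 0 < t) (i : ℕ) :
    cosineBasisNormalizer t i ^ 2 = if i = 0 then 1 / t else 2 / t := by
  unfold cosineBasisNormalizer
  split_ifs
  · rw [div_pow, one_pow, sq_sqrt ht.le]
  · exact sq_sqrt (by positivity)

lemma integral_cosineBasis_mul (ht : 0 < t) (i j : ℕ) :
    ∫ x in (0 : ℝ)..t, cosineBasis t i x * cosineBasis t j x = if i = j then 1 else 0 := by
  set c := cosineBasisNormalizer t
  have hprod : ∀ x, cosineBasis t i x * cosineBasis t j x
      = c i * c j / 2 * (cos (((i - j : ℤ) : ℝ) * π * x / t)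
        + cos (((i + j : ℤ) : ℝ) * π * x / t)) := by
    intro x
    have h := two_mul_cos_mul_cos (i * π * x / t) (j * π * x / t)
    rw [show ((i - j : ℤ) : ℝ) * π * x / t = i * π * x / t - j * π * x / t by push_cast; ring,
      show ((i + j : ℤ) : ℝ) * π * x / t = i * π * x / t + j * π * x / t by push_cast; ring, ← h]
    simp only [cosineBasis]
    ring
  have hcont : ∀ k : ℤ, IntervalIntegrable (fun x => cos (k * π * x / t)) volume 0 t :=
    fun k => (continuous_cos.comp (by fun_prop)).intervalIntegrable _ _
  simp_rw [hprod]
  rw [intervalIntegral.integral_const_mul, intervalIntegral.integral_add (hcont _) (hcont _),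
    integral_cos_int_mul_pi_div ht.ne', integral_cos_int_mul_pi_div ht.ne']
  rcases eq_or_ne i j with rfl | hij
  · have ht0 : t ≠ 0 := ht.ne'
    rw [← sq, cosineBasisNormalizer_sq ht]
    rcases eq_or_ne i 0 with rfl | hi
    · norm_num
      field_simp
      ring
    · have hi' : (i + i : ℤ) ≠ 0 := by omega
      simp only [hi, hi', if_false, if_true, sub_self, add_zero]
      field_simp
  · have hij' : (i - j : ℤ) ≠ 0 := sub_ne_zero.2 (by exact_mod_cast hij)
    have hij'' : (i + j : ℤ) ≠ 0 := by omega
    simp [hij, hij', hij'']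

lemma sq_integral_cosineBasis (ht : 0 < t) (i : ℕ) (s : ℝ) :
    (∫ τ in (0 : ℝ)..s, cosineBasis t i τ) ^ 2
      = (if i = 0 then s ^ 2 / t else 0) + 2 * t / π ^ 2 * (sin (i * π * (s / t)) ^ 2 / i ^ 2) := by
  have hc := cosineBasisNormalizer_sq ht i
  rcases eq_or_ne i 0 with rfl | hi
  · simp only [cosineBasis, CharP.cast_eq_zero, zero_mul, zero_div, cos_zero, mul_one,
      intervalIntegral.integral_const, smul_eq_mul, sub_zero, if_true] at hc ⊢
    rw [mul_pow, hc]
    simp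
    ring
  · have hk : (i * π / t : ℝ) ≠ 0 := by simp [hi, ht.ne', pi_ne_zero]
    simp only [cosineBasis]
    simp_rw [show ∀ x : ℝ, i * π * x / t = i * π / t * x from fun x => by ring]
    rw [intervalIntegral.integral_const_mul,
      intervalIntegral.integral_comp_mul_left (fun x => cos x) hk, integral_cos]
    rw [if_neg hi] at hc
    simp only [if_neg hi, mul_zero, sin_zero, sub_zero, smul_eq_mul, zero_add, mul_pow, hc]
    field_simp

lemma hasSum_sin_sq_div_sq {x : ℝ} (hx : x ∈ Set.Icc (0 : ℝ) 1) :
    HasSum (fun n : ℕ => sin (n * π * x) ^ 2 / n ^ 2) (π ^ 2 / 2 * (x - x ^ 2)) := by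
  have hcos : ∀ y ∈ Set.Icc (0 : ℝ) 1,
      HasSum (fun n : ℕ => 1 / (n : ℝ) ^ 2 * cos (2 * π * n * y)) (π ^ 2 * (y ^ 2 - y + 1 / 6)) := by
    intro y hy
    have hB : ((Polynomial.bernoulli 2).map (algebraMap ℚ ℝ)).eval y = y ^ 2 - y + 1 / 6 := by
      simp [Polynomial.bernoulli, Finset.sum_range_succ, bernoulli_two]
      ring
    have hc : (-1 : ℝ) ^ (1 + 1) * (2 * π) ^ 2 / 2 / (Nat.factorial 2 : ℕ) = π ^ 2 := by
      norm_num [Nat.factorial]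
      ring
    simpa only [mul_one, hB, hc] using hasSum_one_div_nat_pow_mul_cos one_ne_zero hy
  have hterm : ∀ n : ℕ, sin (n * π * x) ^ 2 / n ^ 2
      = (1 / (n : ℝ) ^ 2 * cos (2 * π * n * 0) - 1 / (n : ℝ) ^ 2 * cos (2 * π * n * x)) / 2 := by
    intro n
    have hpyth := sin_sq_add_cos_sq (n * π * x)
    rw [show 2 * π * n * x = 2 * (n * π * x) by ring, mul_zero, cos_zero, cos_two_mul]
    linear_combination (1 / (n : ℝ) ^ 2) * hpyth
  simp_rw [hterm]
  rw [show π ^ 2 / 2 * (x - x ^ 2)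
      = (π ^ 2 * (0 ^ 2 - 0 + 1 / 6) - π ^ 2 * (x ^ 2 - x + 1 / 6)) / 2 by ring]
  exact ((hcos 0 (Set.left_mem_Icc.2 zero_le_one)).sub (hcos x hx)).div_const 2

lemma sub_sum_sq_integral_cosineBasis_le {s : ℝ} (ht : 0 < t) (hs : s ∈ Set.Icc 0 t) {K : ℕ}
    (hK : 1 ≤ K) : s - ∑ i ∈ Finset.range K, (∫ τ in (0 : ℝ)..s, cosineBasis t i τ) ^ 2 ≤ t / K := by
  set x := s / t
  have hx : x ∈ Set.Icc (0 : ℝ) 1 := ⟨div_nonneg hs.1 ht.le, (div_le_one ht).2 hs.2⟩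
  have htail := (hasSum_sin_sq_div_sq hx).sub_sum_range_le_two_div
    (fun n => div_le_div_of_nonneg_right (sin_sq_le_one _) (by positivity)) hK
  have hxt : x * t = s := div_mul_cancel₀ s ht.ne'
  have hs_eq : s = s ^ 2 / t + 2 * t / π ^ 2 * (π ^ 2 / 2 * (x - x ^ 2)) := by
    field_simp
    linear_combination (x * t + s - t) * hxt
  have hpi : 4 ≤ π ^ 2 := by nlinarith [pi_gt_three]
  simp_rw [sq_integral_cosineBasis ht]
  rw [Finset.sum_add_distrib, Finset.sum_ite_eq', if_pos (Finset.mem_range.2 hK), ← Finset.mul_sum]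
  calc s - (s ^ 2 / t + 2 * t / π ^ 2 * ∑ i ∈ Finset.range K, sin (i * π * x) ^ 2 / i ^ 2)
      = 2 * t / π ^ 2 * (π ^ 2 / 2 * (x - x ^ 2)
          - ∑ i ∈ Finset.range K, sin (i * π * x) ^ 2 / i ^ 2) := by
        linear_combination hs_eq
    _ ≤ 2 * t / π ^ 2 * (2 / K) := by gcongr
    _ ≤ t / K := by
        rw [div_mul_div_comm, div_le_div_iff₀ (by positivity) (by positivity)]
        nlinarith [mul_le_mul_of_nonneg_left hpi (by positivity : (0 : ℝ) ≤ t * K)]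

end CosineBasis

lemma Orthonormal.norm_sub_sum_inner_smul_sq {ι E : Type*} [NormedAddCommGroup E]
    [InnerProductSpace ℝ E] {e : ι → E} (he : Orthonormal ℝ e) (x : E) (S : Finset ι) :
    ‖x - ∑ i ∈ S, inner ℝ (e i) x • e i‖ ^ 2 = ‖x‖ ^ 2 - ∑ i ∈ S, inner ℝ (e i) x ^ 2 := by
  have hcross : inner ℝ x (∑ i ∈ S, inner ℝ (e i) x • e i) = ∑ i ∈ S, inner ℝ (e i) x ^ 2 := by
    simp_rw [inner_sum, real_inner_smul_right, real_inner_comm x, sq]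
  have hproj : ‖∑ i ∈ S, inner ℝ (e i) x • e i‖ ^ 2 = ∑ i ∈ S, inner ℝ (e i) x ^ 2 := by
    rw [← real_inner_self_eq_norm_sq, he.inner_sum]
    simp_rw [conj_trivial, sq]
  rw [norm_sub_sq_real, hcross, hproj]
  ring

namespace MeasureTheory

variable {α : Type*} [MeasurableSpace α] {μ : Measure α}

lemma L2.integral_sq_eq_norm_sq (f : Lp ℝ 2 μ) : ∫ a, f a ^ 2 ∂μ = ‖f‖ ^ 2 := by
  rw [← real_inner_self_eq_norm_sq, L2.inner_def]
  simp [sq]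

lemma Lp.coeFn_sum_smul {p : ENNReal} {ι : Type*} (S : Finset ι) (c : ι → ℝ) (f : ι → Lp ℝ p μ) :
    ⇑(∑ i ∈ S, c i • f i) =ᵐ[μ] fun a => ∑ i ∈ S, c i * f i a := by
  induction S using Finset.cons_induction with
  | empty =>
    simp only [Finset.sum_empty]
    exact Lp.coeFn_zero ℝ p μ
  | cons i S hi ih =>
    rw [Finset.sum_cons]
    filter_upwards [Lp.coeFn_add (c i • f i) (∑ j ∈ S, c j • f j), Lp.coeFn_smul (c i) (f i), ih]
      with a hadd hsmul hsum
    simp only [hadd, Pi.add_apply, hsmul, Pi.smul_apply, smul_eq_mul, hsum, Finset.sum_cons]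

lemma LinearIsometry.integral_sq_sub_sum_orthonormal {Ω ι : Type*} [MeasurableSpace Ω]
    {P : Measure Ω} (I : Lp ℝ 2 μ →ₗᵢ[ℝ] Lp ℝ 2 P) {e : ι → Lp ℝ 2 μ} (he : Orthonormal ℝ e)
    (x : Lp ℝ 2 μ) (S : Finset ι) :
    ∫ ω, (I x ω - ∑ i ∈ S, inner ℝ (e i) x * I (e i) ω) ^ 2 ∂P
      = ‖x‖ ^ 2 - ∑ i ∈ S, inner ℝ (e i) x ^ 2 := by
  have hcoe : ⇑(I (x - ∑ i ∈ S, inner ℝ (e i) x • e i))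
      =ᵐ[P] fun ω => I x ω - ∑ i ∈ S, inner ℝ (e i) x * I (e i) ω := by
    simp only [map_sub, map_sum, LinearIsometry.map_smul]
    filter_upwards [Lp.coeFn_sub (I x) (∑ i ∈ S, inner ℝ (e i) x • I (e i)),
      Lp.coeFn_sum_smul S _ fun i => I (e i)] with ω hsub hsum
    rw [hsub, Pi.sub_apply, hsum]
  have hsq : (fun ω => I (x - ∑ i ∈ S, inner ℝ (e i) x • e i) ω ^ 2)
      =ᵐ[P] fun ω => (I x ω - ∑ i ∈ S, inner ℝ (e i) x * I (e i) ω) ^ 2 := by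
    filter_upwards [hcoe] with ω hω
    rw [hω]
  rw [← integral_congr_ae hsq, L2.integral_sq_eq_norm_sq, I.norm_map,
    he.norm_sub_sum_inner_smul_sq]

lemma L2.inner_eq_intervalIntegral {t : ℝ} (ht : 0 ≤ t)
    {f g : Lp ℝ 2 (volume.restrict (Set.Icc 0 t))} {f' g' : ℝ → ℝ}
    (hf : f =ᵐ[volume.restrict (Set.Icc 0 t)] f') (hg : g =ᵐ[volume.restrict (Set.Icc 0 t)] g') :
    inner ℝ f g = ∫ τ in (0 : ℝ)..t, f' τ * g' τ := by
  rw [L2.inner_def, intervalIntegral.integral_of_le ht, ← integral_Icc_eq_integral_Ioc]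
  refine integral_congr_ae ?_
  filter_upwards [hf, hg] with τ hfτ hgτ
  simp [hfτ, hgτ, mul_comm]

end MeasureTheory

lemma intervalIntegral_indicator_Icc_mul {s t : ℝ} (hs : s ∈ Set.Icc 0 t) (h : ℝ → ℝ) :
    ∫ τ in (0 : ℝ)..t, Set.indicator (Set.Icc 0 s) 1 τ * h τ = ∫ τ in (0 : ℝ)..s, h τ := by
  simp_rw [← Set.indicator_mul_left, Pi.one_apply, one_mul]
  rw [intervalIntegral.integral_of_le (hs.1.trans hs.2), intervalIntegral.integral_of_le hs.1,
    ← integral_Icc_eq_integral_Ioc, ← integral_Icc_eq_integral_Ioc,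
    MeasureTheory.integral_indicator measurableSet_Icc, Measure.restrict_restrict measurableSet_Icc,
    Set.inter_eq_left.2 (Set.Icc_subset_Icc le_rfl hs.2)]

theorem stmt_13_general {Ω : Type*} [MeasurableSpace Ω] (P : Measure Ω)
    (t : ℝ) (ht : 0 < t)
    (μ : Measure ℝ) (hμ : μ = volume.restrict (Set.Icc 0 t))
    (I : Lp ℝ 2 μ →ₗᵢ[ℝ] Lp ℝ 2 P)
    (m : ℕ → ℝ → ℝ)
    (hm0 : m 0 = fun _ => 1 / Real.sqrt t)
    (hm : ∀ i : ℕ, 1 ≤ i →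
      m i = fun s => Real.sqrt (2 / t) * Real.cos (i * Real.pi * s / t))
    (e : ℕ → Lp ℝ 2 μ) (he : ∀ i, (e i : ℝ → ℝ) =ᵐ[μ] m i)
    (ind : ℝ → Lp ℝ 2 μ)
    (hind : ∀ s ∈ Set.Icc 0 t, (ind s : ℝ → ℝ) =ᵐ[μ] Set.indicator (Set.Icc 0 s) 1)
    (W : ℝ → Ω → ℝ)
    (hW : ∀ s ∈ Set.Icc 0 t, W s =ᵐ[P] ⇑(I (ind s)))
    (ξ : ℕ → Ω → ℝ) (hξ : ∀ i, ξ i = ⇑(I (e i))) :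
    ∃ c : ℝ, 0 < c ∧ ∀ K : ℕ, 1 ≤ K → ∀ s ∈ Set.Icc 0 t,
      ∫ ω, (W s ω - ∑ i ∈ Finset.range K, (∫ τ in (0 : ℝ)..s, m i τ) * ξ i ω) ^ 2 ∂P
        ≤ c * t / K := by
  subst hμ
  have hm_eq : m = cosineBasis t := by
    funext i s
    rcases Nat.eq_zero_or_pos i with rfl | hi
    · simp [hm0, cosineBasis, cosineBasisNormalizer]
    · simp [hm i hi, cosineBasis, cosineBasisNormalizer, hi.ne']
  have he_on : Orthonormal ℝ e := orthonormal_iff_ite.2 fun i j => by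
    rw [L2.inner_eq_intervalIntegral ht.le (he i) (he j), hm_eq, integral_cosineBasis_mul ht]
  refine ⟨1, one_pos, fun K hK s hs => ?_⟩
  have hcoeff : ∀ i, inner ℝ (e i) (ind s) = ∫ τ in (0 : ℝ)..s, m i τ := fun i => by
    rw [real_inner_comm, L2.inner_eq_intervalIntegral ht.le (hind s hs) (he i),
      intervalIntegral_indicator_Icc_mul hs]
  have hnorm : ‖ind s‖ ^ 2 = s := by
    rw [← real_inner_self_eq_norm_sq, L2.inner_eq_intervalIntegral ht.le (hind s hs) (hind s hs),
      intervalIntegral_indicator_Icc_mul hs, intervalIntegral.integral_congr (g := fun _ => 1)]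
    · simp
    · intro τ hτ
      rw [Set.uIcc_of_le hs.1] at hτ
      simp [Set.indicator_of_mem hτ]
  calc ∫ ω, (W s ω - ∑ i ∈ Finset.range K, (∫ τ in (0 : ℝ)..s, m i τ) * ξ i ω) ^ 2 ∂P
      = ∫ ω, (I (ind s) ω - ∑ i ∈ Finset.range K, inner ℝ (e i) (ind s) * I (e i) ω) ^ 2 ∂P := by
        refine integral_congr_ae ?_
        filter_upwards [hW s hs] with ω hω
        simp only [hω, hξ, hcoeff]
    _ = s - ∑ i ∈ Finset.range K, (∫ τ in (0 : ℝ)..s, m i τ) ^ 2 := by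
        rw [I.integral_sq_sub_sum_orthonormal he_on, hnorm]
        simp only [hcoeff]
    _ ≤ 1 * t / K := by
        rw [one_mul, hm_eq]
        exact sub_sum_sq_integral_cosineBasis_le ht hs hK

theorem stmt_13 {Ω : Type*} [MeasurableSpace Ω] (P : Measure Ω) [IsProbabilityMeasure P]
    (t : ℝ) (ht : 0 < t)
    (μ : Measure ℝ) (hμ : μ = volume.restrict (Set.Icc 0 t))
    (I : Lp ℝ 2 μ →ₗᵢ[ℝ] Lp ℝ 2 P)
    (hGauss : ∀ f : Lp ℝ 2 μ, Measure.map (⇑(I f)) P = gaussianReal 0 (‖f‖₊ ^ 2))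
    (hIndep : ∀ g : ℕ → Lp ℝ 2 μ,
      Pairwise (fun i j => (inner ℝ (g i) (g j) : ℝ) = 0) →
      iIndepFun (fun i => ⇑(I (g i))) P)
    (m : ℕ → ℝ → ℝ)
    (hm0 : m 0 = fun _ => 1 / Real.sqrt t)
    (hm : ∀ i : ℕ, 1 ≤ i →
      m i = fun s => Real.sqrt (2 / t) * Real.cos (i * Real.pi * s / t))
    (e : ℕ → Lp ℝ 2 μ) (he : ∀ i, (e i : ℝ → ℝ) =ᵐ[μ] m i)
    (ind : ℝ → Lp ℝ 2 μ)
    (hind : ∀ s ∈ Set.Icc 0 t, (ind s : ℝ → ℝ) =ᵐ[μ] Set.indicator (Set.Icc 0 s) 1)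
    (W : ℝ → Ω → ℝ)
    (hW : ∀ s ∈ Set.Icc 0 t, W s =ᵐ[P] ⇑(I (ind s)))
    (ξ : ℕ → Ω → ℝ) (hξ : ∀ i, ξ i = ⇑(I (e i))) :
    ∃ c : ℝ, 0 < c ∧ ∀ K : ℕ, 1 ≤ K → ∀ s ∈ Set.Icc 0 t,
      ∫ ω, (W s ω - ∑ i ∈ Finset.range K, (∫ τ in (0 : ℝ)..s, m i τ) * ξ i ω) ^ 2 ∂P
        ≤ c * t / K :=
  stmt_13_general P t ht μ hμ I m hm0 hm e he ind hind W hW ξ hξ
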